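/- Let $a>0$, $0<c<1$, $0<\beta<1$, and suppose the quartic $q(\xi)$ (the numerator of $z'(\xi)$ for $z(\xi)=-1/\xi+c(1-\beta)/(1+\xi)+ca\beta/(1+a\xi)$) has exactly two real roots $\gamma_1<\gamma_2$, both necessarily negative. Then $z'(\xi)>0$ for all $\xi$ in $(-\infty,\gamma_1)\cup(\gamma_2,0)\cup(0,\infty)$ not equal to $-1$ or $-1/a$, the points $-1$ and $-1/a$ both lie in the interval $(\gamma_1,\gamma_2)$, and $z'(\xi)<0$ on $(\gamma_1,\gamma_2)\setminus\{-1,-1/a\}$. -/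

import Mathlib

/-- The quartic numerator of `z'(ξ)`. -/
noncomputable def quartic (a c β x : ℝ) : ℝ :=
  a^2*(1-c)*x^4 + 2*(a^2*(1-c*β) + a*(1-c*(1-β)))*x^3
    + (1-c*(1-β)+a^2*(1-c*β)+4*a)*x^2 + 2*(1+a)*x + 1

/-- The map `z(ξ)`. -/
noncomputable def zmap (a c β ξ : ℝ) : ℝ :=
  -1/ξ + c*(1-β)/(1+ξ) + c*a*β/(1+a*ξ)

/-!
Clearing denominators, `z' = q / (ξ (1 + ξ) (1 + a ξ))²`, so away from the poles `z'` has the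
sign of `q`. Since `q` has positive coefficients it is positive on `[0, ∞)`, and it tends to `+∞`
at `-∞`; on the other hand `q (-1) = -c (1 - β) (a - 1)²` and `a² q (-1/a) = -c β (a - 1)²` are
negative. As `γ₁ < γ₂` are the only zeros of `q`, the intermediate value theorem makes `q` of
constant sign on each of `(-∞, γ₁)`, `(γ₁, γ₂)`, `(γ₂, ∞)`, and these three values fix the signs.
-/

open Filter Set

section ConstantSign

variable {X α : Type*} [TopologicalSpace X] [LinearOrder α] [TopologicalSpace α]
  [OrderClosedTopology α] [Zero α] {s : Set X} {f : X → α} {b x : X}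

theorem IsPreconnected.pos_of_forall_ne_zero (hs : IsPreconnected s) (hf : ContinuousOn f s)
    (hne : ∀ y ∈ s, f y ≠ 0) (hb : b ∈ s) (hfb : 0 < f b) (hx : x ∈ s) : 0 < f x := by
  by_contra! hfx
  obtain ⟨y, hy, hfy⟩ := hs.intermediate_value₂ hx hb hf continuousOn_const hfx hfb.le
  exact hne y hy hfy

theorem IsPreconnected.neg_of_forall_ne_zero (hs : IsPreconnected s) (hf : ContinuousOn f s)
    (hne : ∀ y ∈ s, f y ≠ 0) (hb : b ∈ s) (hfb : f b < 0) (hx : x ∈ s) : f x < 0 := by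
  by_contra! hfx
  obtain ⟨y, hy, hfy⟩ := hs.intermediate_value₂ hb hx hf continuousOn_const hfb.le hfx
  exact hne y hy hfy

end ConstantSign

theorem tendsto_quartic_fun_atBot {A B C D E : ℝ} (hA : 0 < A) (hC : 0 < C) :
    Tendsto (fun x : ℝ => A * x ^ 4 + B * x ^ 3 + C * x ^ 2 + D * x + E) atBot atTop := by
  have hsq : Tendsto (fun x : ℝ => x * x) atBot atTop := tendsto_id.atBot_mul_atBot₀ tendsto_id
  have hlin : ∀ {K : ℝ}, 0 < K → ∀ L : ℝ,
      Tendsto (fun x : ℝ => x * (K * x + L)) atBot atTop := fun hK L =>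
    tendsto_id.atBot_mul_atBot₀ (tendsto_atBot_add_const_right _ L (tendsto_id.const_mul_atBot hK))
  refine tendsto_atTop_add_const_right _ E (((hsq.atTop_mul_atTop₀ (hlin hA B)).atTop_add_atTop
    (hlin hC D)).congr fun x => ?_)
  ring

section Quartic

variable {a c β : ℝ}

theorem quartic_coeffs_pos (ha : 0 < a) (hc0 : 0 < c) (hc1 : c < 1) (hβ0 : 0 < β) (hβ1 : β < 1) :
    0 < a ^ 2 * (1 - c) ∧ 0 < 2 * (a ^ 2 * (1 - c * β) + a * (1 - c * (1 - β))) ∧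
      0 < 1 - c * (1 - β) + a ^ 2 * (1 - c * β) + 4 * a ∧ 0 < 2 * (1 + a) := by
  have h1 : 0 < 1 - c * β := by nlinarith
  have h2 : 0 < 1 - c * (1 - β) := by nlinarith
  have h3 : 0 < 1 - c := by linarith
  refine ⟨?_, ?_, ?_, by linarith⟩ <;> positivity

theorem quartic_pos_of_nonneg (ha : 0 < a) (hc0 : 0 < c) (hc1 : c < 1) (hβ0 : 0 < β)
    (hβ1 : β < 1) {x : ℝ} (hx : 0 ≤ x) : 0 < quartic a c β x := by
  obtain ⟨hA, hB, hC, hD⟩ := quartic_coeffs_pos ha hc0 hc1 hβ0 hβ1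
  unfold quartic
  positivity

theorem tendsto_quartic_atBot (ha : 0 < a) (hc0 : 0 < c) (hc1 : c < 1) (hβ0 : 0 < β)
    (hβ1 : β < 1) : Tendsto (quartic a c β) atBot atTop :=
  let ⟨hA, _, hC, _⟩ := quartic_coeffs_pos ha hc0 hc1 hβ0 hβ1
  tendsto_quartic_fun_atBot hA hC

theorem continuous_quartic : Continuous (quartic a c β) := by
  unfold quartic
  fun_prop

theorem quartic_neg_one_neg (ha1 : a ≠ 1) (hc0 : 0 < c) (hβ1 : β < 1) :
    quartic a c β (-1) < 0 := by
  have hq : quartic a c β (-1) = -(c * (1 - β) * (a - 1) ^ 2) := by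
    unfold quartic
    ring
  have : 0 < c * (1 - β) * (a - 1) ^ 2 := by
    have := sub_ne_zero.2 ha1
    have : 0 < 1 - β := by linarith
    positivity
  linarith

theorem quartic_neg_inv_neg (ha : 0 < a) (ha1 : a ≠ 1) (hc0 : 0 < c) (hβ0 : 0 < β) :
    quartic a c β (-1 / a) < 0 := by
  have hq : quartic a c β (-1 / a) = -(c * β * (a - 1) ^ 2) / a ^ 2 := by
    unfold quartic
    field_simp
    ring
  have : 0 < c * β * (a - 1) ^ 2 := by
    have := sub_ne_zero.2 ha1
    positivity
  rw [hq, neg_div]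
  exact neg_neg_of_pos (by positivity)

end Quartic

section Derivative

variable {a c β ξ : ℝ}

theorem hasDerivAt_zmap (h0 : ξ ≠ 0) (h1 : 1 + ξ ≠ 0) (h2 : 1 + a * ξ ≠ 0) :
    HasDerivAt (zmap a c β) (quartic a c β ξ / (ξ * (1 + ξ) * (1 + a * ξ)) ^ 2) ξ := by
  have hz := (((hasDerivAt_const ξ (-1 : ℝ)).div (hasDerivAt_id' ξ) h0).add
    ((hasDerivAt_const ξ (c * (1 - β))).div ((hasDerivAt_id' ξ).const_add 1) h1)).add
    ((hasDerivAt_const ξ (c * a * β)).div (((hasDerivAt_id' ξ).const_mul a).const_add 1) h2)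
  refine hz.congr_deriv ?_
  unfold quartic
  rw [div_add_div _ _ (by simpa) (by simpa), div_add_div _ _ (by simp [*]) (by simpa),
    div_eq_div_iff (by simp [*]) (by simp [*])]
  ring

theorem deriv_zmap_pos (h0 : ξ ≠ 0) (h1 : 1 + ξ ≠ 0) (h2 : 1 + a * ξ ≠ 0)
    (hq : 0 < quartic a c β ξ) : 0 < deriv (zmap a c β) ξ := by
  rw [(hasDerivAt_zmap h0 h1 h2).deriv]
  exact div_pos hq (pow_two_pos_of_ne_zero (by simp [*]))

theorem deriv_zmap_neg (h0 : ξ ≠ 0) (h1 : 1 + ξ ≠ 0) (h2 : 1 + a * ξ ≠ 0)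
    (hq : quartic a c β ξ < 0) : deriv (zmap a c β) ξ < 0 := by
  rw [(hasDerivAt_zmap h0 h1 h2).deriv]
  exact div_neg_of_neg_of_pos hq (pow_two_pos_of_ne_zero (by simp [*]))

end Derivative

theorem sign_of_deriv_z
    (a c β : ℝ) (ha : 0 < a) (ha1 : a ≠ 1) (hc0 : 0 < c) (hc1 : c < 1)
    (hβ0 : 0 < β) (hβ1 : β < 1)
    (γ1 γ2 : ℝ) (hlt : γ1 < γ2)
    (hq1 : quartic a c β γ1 = 0) (hq2 : quartic a c β γ2 = 0)
    (honly : ∀ x : ℝ, quartic a c β x = 0 → x = γ1 ∨ x = γ2) :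
    γ2 < 0 ∧
    (∀ ξ : ℝ, (ξ < γ1 ∨ (γ2 < ξ ∧ ξ < 0) ∨ 0 < ξ) → ξ ≠ -1 → ξ ≠ -1/a →
        0 < deriv (zmap a c β) ξ) ∧
    (-1 : ℝ) ∈ Set.Ioo γ1 γ2 ∧ (-1/a : ℝ) ∈ Set.Ioo γ1 γ2 ∧
    (∀ ξ ∈ Set.Ioo γ1 γ2, ξ ≠ -1 → ξ ≠ -1/a → deriv (zmap a c β) ξ < 0) := by
  set q := quartic a c β
  have hq : Continuous q := continuous_quartic
  have poles : ∀ ξ : ℝ, ξ ≠ -1 → ξ ≠ -1 / a → 1 + ξ ≠ 0 ∧ 1 + a * ξ ≠ 0 := fun ξ h1 h2 =>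
    ⟨fun h => h1 (by linarith), fun h => h2 (by field_simp; linarith)⟩
  have hγ2 : γ2 < 0 := not_le.1 fun h => (quartic_pos_of_nonneg ha hc0 hc1 hβ0 hβ1 h).ne' hq2
  obtain ⟨b, hqb, hb⟩ := (((tendsto_quartic_atBot ha hc0 hc1 hβ0 hβ1).eventually_gt_atTop 0).and
    (eventually_lt_atBot γ1)).exists
  have pos_left : ∀ ξ < γ1, 0 < q ξ := fun ξ hξ =>
    isPreconnected_Iio.pos_of_forall_ne_zero hq.continuousOn
      (fun x (hx : x < γ1) h0 => by rcases honly x h0 with rfl | rfl <;> linarith) hb hqb hξ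
  have pos_right : ∀ ξ, γ2 < ξ → 0 < q ξ := fun ξ hξ =>
    isPreconnected_Ioi.pos_of_forall_ne_zero hq.continuousOn
      (fun x (hx : γ2 < x) h0 => by rcases honly x h0 with rfl | rfl <;> linarith)
      (mem_Ioi.2 hγ2) (quartic_pos_of_nonneg ha hc0 hc1 hβ0 hβ1 le_rfl) hξ
  have mem_of_neg : ∀ x, q x < 0 → x ∈ Ioo γ1 γ2 := fun x hx =>
    ⟨(not_lt.1 fun h => hx.not_gt (pos_left x h)).lt_of_ne (by rintro rfl; linarith),
      (not_lt.1 fun h => hx.not_gt (pos_right x h)).lt_of_ne' (by rintro rfl; linarith)⟩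
  have hneg1 := mem_of_neg _ (quartic_neg_one_neg ha1 hc0 hβ1)
  have neg_mid : ∀ ξ ∈ Ioo γ1 γ2, q ξ < 0 := fun ξ hξ =>
    isPreconnected_Ioo.neg_of_forall_ne_zero hq.continuousOn
      (fun x hx h0 => by rcases honly x h0 with rfl | rfl <;> linarith [hx.1, hx.2]) hneg1
      (quartic_neg_one_neg ha1 hc0 hβ1) hξ
  refine ⟨hγ2, fun ξ hξ h1 h2 => ?_, hneg1, mem_of_neg _ (quartic_neg_inv_neg ha ha1 hc0 hβ0),
    fun ξ hξ h1 h2 => ?_⟩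
  · have h0 : ξ ≠ 0 := by rcases hξ with h | h | h <;> [linarith [hneg1.1]; linarith; linarith]
    refine deriv_zmap_pos h0 (poles ξ h1 h2).1 (poles ξ h1 h2).2 ?_
    rcases hξ with h | h | h
    exacts [pos_left ξ h, pos_right ξ h.1, pos_right ξ (hγ2.trans h)]
  · exact deriv_zmap_neg (hξ.2.trans hγ2).ne (poles ξ h1 h2).1 (poles ξ h1 h2).2 (neg_mid ξ hξ)
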